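/- arXiv:1808.02070 — 2 statements merged into one kernel-verified Lean document; each statement's English description precedes it below -/
import Mathlib

section
/- Let A and B be n×n matrices over an infinite field K with A ≠ B. Then there exists a matrix X such that det(A + X) ≠ det(B + X). -/
/-! Put D = B - A ≠ 0 and pick x with D x ≠ 0. Since invertible maps act transitively on nonzero
vectors, some invertible Y sends x to -D x. Then X = Y - A makes A + X = Y invertible, while
B + X = Y + D kills x and is singular. -/

open Matrix

theorem exists_linearEquiv_apply_eq {K V : Type*} [DivisionRing K] [AddCommGroup V] [Module K V]
    {x y : V} (hx : x ≠ 0) (hy : y ≠ 0) : ∃ g : V ≃ₗ[K] V, g x = y := by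
  let f : (K ∙ x) ≃ₗ[K] (K ∙ y) :=
    LinearEquiv.coord K V x hx ≪≫ₗ LinearEquiv.toSpanNonzeroSingleton K V y hy
  obtain ⟨g, hg⟩ := Submodule.exists_linearEquiv_restrict_eq f
  refine ⟨g, ?_⟩
  simpa [f, LinearEquiv.coord_self] using (hg ⟨x, Submodule.mem_span_singleton_self x⟩).symm

theorem Matrix.exists_det_ne_zero_and_det_add_eq_zero {ι K : Type*} [Fintype ι] [DecidableEq ι]
    [Field K] {D : Matrix ι ι K} (hD : D ≠ 0) : ∃ Y : Matrix ι ι K, Y.det ≠ 0 ∧ (Y + D).det = 0 := by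
  obtain ⟨x, hDx⟩ : ∃ x, D *ᵥ x ≠ 0 := by
    by_contra! h
    exact hD (toLin'.injective (LinearMap.ext fun x => by simpa using h x))
  have hx : x ≠ 0 := by rintro rfl; simp at hDx
  obtain ⟨g, hg⟩ := exists_linearEquiv_apply_eq (K := K) hx (neg_ne_zero.mpr hDx)
  refine ⟨LinearMap.toMatrix' g, ?_, exists_mulVec_eq_zero_iff.mp ⟨x, hx, ?_⟩⟩
  · rw [LinearMap.det_toMatrix']
    exact (LinearEquiv.isUnit_det' g).ne_zero
  · rw [add_mulVec, LinearMap.toMatrix'_mulVec, LinearEquiv.coe_coe, hg, neg_add_cancel]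

theorem stmt10_general {K : Type*} [Field K] {n : ℕ}
    (A B : Matrix (Fin n) (Fin n) K) (hAB : A ≠ B) :
    ∃ X : Matrix (Fin n) (Fin n) K, (A + X).det ≠ (B + X).det := by
  obtain ⟨Y, hY, hYD⟩ := exists_det_ne_zero_and_det_add_eq_zero (sub_ne_zero.mpr hAB.symm)
  refine ⟨Y - A, ?_⟩
  rwa [add_sub_cancel, show B + (Y - A) = Y + (B - A) by abel, hYD]

theorem stmt10 {K : Type*} [Field K] [Infinite K] {n : ℕ} (hn : 0 < n)
    (A B : Matrix (Fin n) (Fin n) K) (hAB : A ≠ B) :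
    ∃ X : Matrix (Fin n) (Fin n) K, (A + X).det ≠ (B + X).det :=
  stmt10_general A B hAB
end

section
/- Let A and B be n×n matrices over an infinite field K. If det(A + X) = det(B + X) for every matrix X, then A = B. -/
/-!
Write `C = A - B`, so that `det (C + N) = det N` for every `N`. This property survives
`C ↦ P * C * Q` for invertible `P`, `Q`, since `P * C * Q + N = P * (C + P⁻¹ * N * Q⁻¹) * Q`.
Gaussian elimination by transvections brings `C` to a diagonal matrix `diagonal d`, and a
diagonal matrix with the property is zero: if `N` is diagonal with `0` in place `i` and
`1 - d k` in every other place `k`, then `det N = 0` while `det (diagonal d + N) = d i`.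
-/

open Matrix

section CommRing

variable {ι R : Type*} [Fintype ι] [DecidableEq ι] [CommRing R]

theorem forall_det_mul_mul_add_eq {C : Matrix ι ι R}
    (hC : ∀ N : Matrix ι ι R, (C + N).det = N.det) {P Q : Matrix ι ι R}
    (hP : IsUnit P.det) (hQ : IsUnit Q.det) (N : Matrix ι ι R) :
    (P * C * Q + N).det = N.det := by
  have hN : P * C * Q + N = P * (C + P⁻¹ * N * Q⁻¹) * Q := by
    simp only [Matrix.mul_add, Matrix.add_mul, Matrix.mul_assoc, nonsing_inv_mul Q hQ,
      Matrix.mul_one, mul_nonsing_inv_cancel_left _ _ hP]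
  rw [hN, det_mul, det_mul, hC, det_mul, det_mul, det_nonsing_inv, det_nonsing_inv]
  calc P.det * (Ring.inverse P.det * N.det * Ring.inverse Q.det) * Q.det
      = (P.det * Ring.inverse P.det) * (Ring.inverse Q.det * Q.det) * N.det := by ring
    _ = N.det := by
      rw [Ring.mul_inverse_cancel _ hP, Ring.inverse_mul_cancel _ hQ, one_mul, one_mul]

theorem eq_zero_of_forall_det_diagonal_add_eq {d : ι → R}
    (hd : ∀ N : Matrix ι ι R, (diagonal d + N).det = N.det) : d = 0 := by
  funext i
  set g : ι → R := Function.update (1 - d) i 0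
  have hsum : d + g = Function.update (1 : ι → R) i (d i) := by
    funext k
    by_cases hk : k = i
    · subst hk; simp [g]
    · simp [g, hk]
  have hdet := hd (diagonal g)
  rw [diagonal_add, ← Pi.add_def, hsum, det_diagonal, det_diagonal,
    Finset.prod_update_of_mem (Finset.mem_univ i)] at hdet
  simpa [Finset.prod_eq_zero (Finset.mem_univ i) (by simp [g] : g i = 0)] using hdet

end CommRing

theorem eq_zero_of_forall_det_add_eq {ι K : Type*} [Fintype ι] [DecidableEq ι] [Field K]
    {C : Matrix ι ι K} (hC : ∀ N : Matrix ι ι K, (C + N).det = N.det) : C = 0 := by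
  obtain ⟨L, L', d, hLCL'⟩ := Pivot.exists_list_transvec_mul_mul_list_transvec_eq_diagonal C
  set P := (L.map TransvectionStruct.toMatrix).prod
  set Q := (L'.map TransvectionStruct.toMatrix).prod
  have hP : IsUnit P.det := by simp [P]
  have hQ : IsUnit Q.det := by simp [Q]
  have hd : d = 0 := eq_zero_of_forall_det_diagonal_add_eq fun N => by
    rw [← hLCL', forall_det_mul_mul_add_eq hC hP hQ]
  rw [hd, Pi.zero_def, diagonal_zero] at hLCL'
  rwa [(Q.isUnit_iff_isUnit_det.mpr hQ).mul_left_eq_zero,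
    (P.isUnit_iff_isUnit_det.mpr hP).mul_right_eq_zero] at hLCL'

theorem stmt11_general {K : Type*} [Field K] {n : ℕ}
    (A B : Matrix (Fin n) (Fin n) K)
    (h : ∀ X : Matrix (Fin n) (Fin n) K, (A + X).det = (B + X).det) :
    A = B := by
  refine sub_eq_zero.mp (eq_zero_of_forall_det_add_eq fun N => ?_)
  simpa [sub_add_eq_add_sub, add_sub_assoc] using h (N - B)

theorem stmt11 {K : Type*} [Field K] [Infinite K] {n : ℕ}
    (A B : Matrix (Fin n) (Fin n) K)
    (h : ∀ X : Matrix (Fin n) (Fin n) K, (A + X).det = (B + X).det) :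
    A = B :=
  stmt11_general A B h
end
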